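/- Let Ω ⊂ ℝ^d be open, V ∈ C^∞(Ω; ℝ), and let φ ∈ C^∞(Ω; ℝ) satisfy the eikonal equation 4 Σ_{j=1}^d sinh²(∂_j φ(x)/2) = V(x) for all x ∈ Ω (equivalently, V(x) = Σ_{j=1}^d (e^{∂_j φ(x)} + e^{−∂_j φ(x)} − 2)). Let a ∈ C^∞(Ω) and let S ⊂ Ω be compact. Then there exist C > 0 and h₀ > 0 such that for all 0 < h < h₀ and all x ∈ S ∩ hℤ^d with x ± h e_j ∈ Ω for every j: |e^{φ(x)/h}(H(h)(a e^{−φ/h}))(x) − h(𝓛a)(x)| ≤ C h², where (𝓛a)(x) = 2 Σ_{j=1}^d sinh(∂_j φ(x)) ∂_j a(x) + Σ_{j=1}^d cosh(∂_j φ(x)) (∂_j² φ(x)) a(x). -/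

import Mathlib

open MeasureTheory Real

noncomputable section

/-- The `j`-th standard basis vector of `ℝ^d`. -/
def evec {d : ℕ} (j : Fin d) : EuclideanSpace ℝ (Fin d) :=
  EuclideanSpace.single j (1 : ℝ)

/-- The point `h·m ∈ ℝ^d` of the scaled lattice `hℤ^d`. -/
def latE (d : ℕ) (h : ℝ) (m : Fin d → ℤ) : EuclideanSpace ℝ (Fin d) :=
  WithLp.toLp 2 (fun i => h * (m i))

/-- The semiclassical discrete Schrödinger operator `H(h)` acting (pointwise) on
functions on `ℝ^d ⊇ hℤ^d`:
`(H(h)u)(x) = −Σ_{|x−y|=h}(u(y)−u(x)) + V(x)u(x)`. -/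
def Hcont {d : ℕ} (V : EuclideanSpace ℝ (Fin d) → ℝ) (h : ℝ)
    (u : EuclideanSpace ℝ (Fin d) → ℝ) (x : EuclideanSpace ℝ (Fin d)) : ℝ :=
  -(∑ j : Fin d, ((u (x + h • evec j) - u x) + (u (x - h • evec j) - u x)))
    + V x * u x

/-- The transport operator
`(𝓛a)(x) = 2 Σ_j sinh(∂_jφ(x)) ∂_j a(x) + Σ_j cosh(∂_jφ(x)) (∂_j²φ(x)) a(x)`. -/
def transportOp {d : ℕ} (φ a : EuclideanSpace ℝ (Fin d) → ℝ)
    (x : EuclideanSpace ℝ (Fin d)) : ℝ :=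
  2 * ∑ j, Real.sinh (fderiv ℝ φ x (evec j)) * fderiv ℝ a x (evec j) +
    ∑ j, Real.cosh (fderiv ℝ φ x (evec j)) *
      (iteratedFDeriv ℝ 2 φ x ![evec j, evec j]) * a x

lemma four_sinh_half_sq (t : ℝ) :
    4 * Real.sinh (t / 2) ^ 2 = Real.exp t + Real.exp (-t) - 2 := by
  have h1 : Real.exp (t/2) * Real.exp (t/2) = Real.exp t := by rw [← Real.exp_add]; norm_num
  have h2 : Real.exp (-(t/2)) * Real.exp (-(t/2)) = Real.exp (-t) := by
    rw [← Real.exp_add]; ring_nf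
  have h3 : Real.exp (t/2) * Real.exp (-(t/2)) = 1 := by rw [← Real.exp_add]; norm_num
  rw [Real.sinh_eq]
  linear_combination h1 + h2 - 2*h3

lemma four_sinh_half_sq' (t : ℝ) :
    4 * ((Real.exp (t / 2) - Real.exp (-(t / 2))) / 2) ^ 2 =
      Real.exp t + Real.exp (-t) - 2 := by
  have := four_sinh_half_sq t
  rwa [Real.sinh_eq] at this

set_option maxHeartbeats 1000000 in
set_option synthInstance.maxHeartbeats 400000 in
set_option synthInstance.maxSize 1024 in
/-- the leading term of the conjugated operator: if `φ` solves the eikonal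
equation `4 Σ_j sinh²(∂_jφ/2) = V` on `Ω`, then on a compact `S ⊆ Ω`, for lattice points
`x ∈ S ∩ hℤ^d` whose neighbours lie in `Ω`,
`|e^{φ(x)/h} (H(h)(a e^{−φ/h}))(x) − h (𝓛a)(x)| ≤ C h²`. -/
theorem transport_leading_term (d : ℕ) (hd : 0 < d)
    (Ω : Set (EuclideanSpace ℝ (Fin d))) (hΩ : IsOpen Ω)
    (V φ a : EuclideanSpace ℝ (Fin d) → ℝ)
    (hV : ContDiffOn ℝ (⊤ : ℕ∞) V Ω) (hφ : ContDiffOn ℝ (⊤ : ℕ∞) φ Ω) (ha : ContDiffOn ℝ (⊤ : ℕ∞) a Ω)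
    (heik : ∀ x ∈ Ω, 4 * ∑ j, Real.sinh (fderiv ℝ φ x (evec j) / 2) ^ 2 = V x)
    (S : Set (EuclideanSpace ℝ (Fin d))) (hS : IsCompact S) (hSΩ : S ⊆ Ω) :
    ∃ C > 0, ∃ h₀ > 0, ∀ h : ℝ, 0 < h → h < h₀ →
      ∀ m : Fin d → ℤ, latE d h m ∈ S →
        (∀ j : Fin d, latE d h m + h • evec j ∈ Ω ∧ latE d h m - h • evec j ∈ Ω) →
        |Real.exp (φ (latE d h m) / h) *
            Hcont V h (fun y => a y * Real.exp (-φ y / h)) (latE d h m) -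
          h * transportOp φ a (latE d h m)| ≤ C * h ^ 2 := by
  classical
  obtain ⟨δ, δpos, hδΩ⟩ := hS.exists_cthickening_subset_open hΩ hSΩ
  set K : Set (EuclideanSpace ℝ (Fin d)) := Metric.cthickening δ S with hKdef
  have hK : IsCompact K := hS.cthickening
  have hKΩ : K ⊆ Ω := hδΩ
  have hSK : S ⊆ K := Metric.self_subset_cthickening S
  -- derivative functions
  set f1 := fderiv ℝ φ with hf1def
  set f2 := fderiv ℝ f1 with hf2def
  set f3 := fderiv ℝ f2 with hf3def
  set g1 := fderiv ℝ a with hg1def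
  set g2 := fderiv ℝ g1 with hg2def
  -- smoothness of derivatives
  have hf1CD : ContDiffOn ℝ 2 f1 Ω := hφ.fderiv_of_isOpen hΩ (WithTop.coe_le_coe.2 le_top)
  have hf2CD : ContDiffOn ℝ 1 f2 Ω := hf1CD.fderiv_of_isOpen hΩ (by norm_num)
  have hg1CD : ContDiffOn ℝ 1 g1 Ω := ha.fderiv_of_isOpen hΩ (WithTop.coe_le_coe.2 le_top)
  -- pointwise strict derivatives
  have hdφ : ∀ z ∈ Ω, HasFDerivAt φ (f1 z) z := fun z hz =>
    ((hφ.contDiffAt (hΩ.mem_nhds hz)).differentiableAt (by norm_num)).hasFDerivAt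
  have hda : ∀ z ∈ Ω, HasFDerivAt a (g1 z) z := fun z hz =>
    ((ha.contDiffAt (hΩ.mem_nhds hz)).differentiableAt (by norm_num)).hasFDerivAt
  have hdf1 : ∀ z ∈ Ω, HasFDerivAt f1 (f2 z) z := fun z hz =>
    ((hf1CD.contDiffAt (hΩ.mem_nhds hz)).differentiableAt (by norm_num)).hasFDerivAt
  have hdf2 : ∀ z ∈ Ω, HasFDerivAt f2 (f3 z) z := fun z hz =>
    ((hf2CD.contDiffAt (hΩ.mem_nhds hz)).differentiableAt (by norm_num)).hasFDerivAt
  have hdg1 : ∀ z ∈ Ω, HasFDerivAt g1 (g2 z) z := fun z hz =>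
    ((hg1CD.contDiffAt (hΩ.mem_nhds hz)).differentiableAt (by norm_num)).hasFDerivAt
  -- bounds on K
  obtain ⟨Ba0, hBa0⟩ := hK.exists_bound_of_continuousOn (ha.continuousOn.mono hKΩ)
  obtain ⟨Ba1, hBa1⟩ := hK.exists_bound_of_continuousOn
    ((ha.continuousOn_fderiv_of_isOpen hΩ (by simp)).mono hKΩ)
  obtain ⟨Ba2, hBa2⟩ := hK.exists_bound_of_continuousOn
    ((hg1CD.continuousOn_fderiv_of_isOpen hΩ le_rfl).mono hKΩ)
  obtain ⟨Bφ1, hBφ1⟩ := hK.exists_bound_of_continuousOn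
    ((hφ.continuousOn_fderiv_of_isOpen hΩ (by simp)).mono hKΩ)
  obtain ⟨Bφ2, hBφ2⟩ := hK.exists_bound_of_continuousOn
    ((hf1CD.continuousOn_fderiv_of_isOpen hΩ (by norm_num)).mono hKΩ)
  obtain ⟨Bφ3, hBφ3⟩ := hK.exists_bound_of_continuousOn
    ((hf2CD.continuousOn_fderiv_of_isOpen hΩ le_rfl).mono hKΩ)
  obtain ⟨Ma0, h0Ma0, hMa0⟩ : ∃ M : ℝ, 0 ≤ M ∧ ∀ z ∈ K, ‖a z‖ ≤ M :=
    ⟨max Ba0 0, le_max_right _ _, fun z hz => (hBa0 z hz).trans (le_max_left _ _)⟩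
  obtain ⟨Ma1, h0Ma1, hMa1⟩ : ∃ M : ℝ, 0 ≤ M ∧ ∀ z ∈ K, ‖g1 z‖ ≤ M :=
    ⟨max Ba1 0, le_max_right _ _, fun z hz => (hBa1 z hz).trans (le_max_left _ _)⟩
  obtain ⟨Ma2, h0Ma2, hMa2⟩ : ∃ M : ℝ, 0 ≤ M ∧ ∀ z ∈ K, ‖g2 z‖ ≤ M :=
    ⟨max Ba2 0, le_max_right _ _, fun z hz => (hBa2 z hz).trans (le_max_left _ _)⟩
  obtain ⟨Mφ1, h0Mφ1, hMφ1⟩ : ∃ M : ℝ, 0 ≤ M ∧ ∀ z ∈ K, ‖f1 z‖ ≤ M :=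
    ⟨max Bφ1 0, le_max_right _ _, fun z hz => (hBφ1 z hz).trans (le_max_left _ _)⟩
  obtain ⟨Mφ2, h0Mφ2, hMφ2⟩ : ∃ M : ℝ, 0 ≤ M ∧ ∀ z ∈ K, ‖f2 z‖ ≤ M :=
    ⟨max Bφ2 0, le_max_right _ _, fun z hz => (hBφ2 z hz).trans (le_max_left _ _)⟩
  obtain ⟨Mφ3, hMφ3def⟩ : ∃ M : ℝ, M = max Bφ3 0 := ⟨_, rfl⟩
  have h0Mφ3 : (0:ℝ) ≤ Mφ3 := by rw [hMφ3def]; exact le_max_right _ _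
  have hBMφ3 : Bφ3 ≤ Mφ3 := by rw [hMφ3def]; exact le_max_left _ _
  have hMφ3 := fun z (hz : z ∈ K) => (hBφ3 z hz).trans hBMφ3
  obtain ⟨c1, hc1def⟩ : ∃ c : ℝ, c = Mφ2 / 2 + Mφ3 := ⟨_, rfl⟩
  have h0c1 : (0:ℝ) ≤ c1 := by rw [hc1def]; linarith only [h0Mφ2, h0Mφ3]
  obtain ⟨CK, hCKdef⟩ :
      ∃ c : ℝ, c = Real.exp Mφ1 * (3 * Ma2 + (Ma0 + Ma1) * (c1 ^ 2 + Mφ3) + Ma1 * Mφ2 / 2) :=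
    ⟨_, rfl⟩
  have h0c1sq : (0:ℝ) ≤ c1 ^ 2 + Mφ3 := by linarith only [sq_nonneg c1, h0Mφ3]
  have h0CK : (0:ℝ) ≤ CK := by
    rw [hCKdef]
    refine mul_nonneg (Real.exp_pos _).le ?_
    have p1 : (0:ℝ) ≤ (Ma0 + Ma1) * (c1 ^ 2 + Mφ3) :=
      mul_nonneg (by linarith only [h0Ma0, h0Ma1]) h0c1sq
    have p2 : (0:ℝ) ≤ Ma1 * Mφ2 := mul_nonneg h0Ma1 h0Mφ2
    linarith only [p1, p2, h0Ma2]
  -- THE KEY ONE-DIRECTION ESTIMATE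
  have key : ∀ h : ℝ, 0 < h → h ≤ δ → h ≤ 1 → h * c1 ≤ 1 →
      ∀ x ∈ S, ∀ v : EuclideanSpace ℝ (Fin d), ‖v‖ = 1 →
      |a (x + h • v) * Real.exp (-(φ (x + h • v) - φ x) / h) -
        Real.exp (-(f1 x v)) * (a x + h * g1 x v - h / 2 * f2 x v v * a x)| ≤ CK * h ^ 2 := by
    intro h hh hhδ hh1 hhc x hx v hv
    have hball : Metric.closedBall x h ⊆ K := fun z hz =>
      Metric.mem_cthickening_of_dist_le z x δ S hx ((Metric.mem_closedBall.1 hz).trans hhδ)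
    have hballΩ : Metric.closedBall x h ⊆ Ω := hball.trans hKΩ
    have hxball : x ∈ Metric.closedBall x h := Metric.mem_closedBall_self hh.le
    set y := x + h • v with hy
    have hyx : y - x = h • v := by rw [hy]; abel
    have hyn : ‖y - x‖ = h := by
      rw [hyx, norm_smul, hv, mul_one, Real.norm_eq_abs, abs_of_pos hh]
    have hyball : y ∈ Metric.closedBall x h := by
      rw [Metric.mem_closedBall, dist_eq_norm, hyn]
    have hseg : ∀ t ∈ Set.Icc (0:ℝ) h, x + t • v ∈ Metric.closedBall x h := by
      intro t ht
      rw [Metric.mem_closedBall, dist_eq_norm, show x + t • v - x = t • v by abel,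
        norm_smul, hv, mul_one, Real.norm_eq_abs, abs_of_nonneg ht.1]
      exact ht.2
    -- first-order Taylor for a
    have estg1 : ∀ z ∈ Metric.closedBall x h, ‖g1 z - g1 x‖ ≤ Ma2 * h := by
      intro z hz
      have := Convex.norm_image_sub_le_of_norm_hasFDerivWithin_le
        (fun w hw => (hdg1 w (hballΩ hw)).hasFDerivWithinAt)
        (fun w hw => hMa2 w (hball hw)) (convex_closedBall x h) hxball hz
      refine this.trans (mul_le_mul_of_nonneg_left ?_ h0Ma2)
      rw [← dist_eq_norm]; exact Metric.mem_closedBall.1 hz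
    have estA : ‖a y - a x - (g1 x) (y - x)‖ ≤ Ma2 * h * ‖y - x‖ :=
      Convex.norm_image_sub_le_of_norm_hasFDerivWithin_le'
        (fun w hw => (hda w (hballΩ hw)).hasFDerivWithinAt) estg1
        (convex_closedBall x h) hxball hyball
    have estA' : |a y - (a x + h * g1 x v)| ≤ Ma2 * h ^ 2 := by
      have h1 : (g1 x) (y - x) = h * g1 x v := by
        rw [hyx, _root_.map_smul, smul_eq_mul]
      calc |a y - (a x + h * g1 x v)| = ‖a y - a x - (g1 x) (y - x)‖ := by
            rw [h1, Real.norm_eq_abs]; congr 1; ring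
        _ ≤ Ma2 * h * ‖y - x‖ := estA
        _ = Ma2 * h ^ 2 := by rw [hyn]; ring
    -- second-order Taylor for φ
    obtain ⟨p, hpdef⟩ : ∃ p0 : ℝ, p0 = f1 x v := ⟨_, rfl⟩
    obtain ⟨q, hqdef⟩ : ∃ q0 : ℝ, q0 = f2 x v v := ⟨_, rfl⟩
    rw [← hpdef, ← hqdef]
    have estf2 : ∀ z ∈ Metric.closedBall x h, ‖f2 z - f2 x‖ ≤ Mφ3 * h := by
      intro z hz
      have := Convex.norm_image_sub_le_of_norm_hasFDerivWithin_le
        (fun w hw => (hdf2 w (hballΩ hw)).hasFDerivWithinAt)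
        (fun w hw => hMφ3 w (hball hw)) (convex_closedBall x h) hxball hz
      refine this.trans (mul_le_mul_of_nonneg_left ?_ h0Mφ3)
      rw [← dist_eq_norm]; exact Metric.mem_closedBall.1 hz
    have estf1 : ∀ z ∈ Metric.closedBall x h,
        ‖f1 z - f1 x - (f2 x) (z - x)‖ ≤ Mφ3 * h * ‖z - x‖ := fun z hz =>
      Convex.norm_image_sub_le_of_norm_hasFDerivWithin_le'
        (fun w hw => (hdf1 w (hballΩ hw)).hasFDerivWithinAt) estf2
        (convex_closedBall x h) hxball hz
    set g : ℝ → ℝ := fun t => φ (x + t • v) - φ x - (t * p + t ^ 2 / 2 * q) with hgdef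
    have hg' : ∀ t ∈ Set.Icc (0:ℝ) h, HasDerivAt g (f1 (x + t • v) v - (p + t * q)) t := by
      intro t ht
      have hline : HasDerivAt (fun s : ℝ => x + s • v) v t := by
        simpa using ((hasDerivAt_id t).smul_const v).const_add x
      have hcomp : HasDerivAt (fun s : ℝ => φ (x + s • v)) (f1 (x + t • v) v) t :=
        (hdφ _ (hballΩ (hseg t ht))).comp_hasDerivAt t hline
      have hpoly : HasDerivAt (fun s : ℝ => s * p + s ^ 2 / 2 * q) (p + t * q) t := by
        have h1 := (hasDerivAt_id t).mul_const p
        have h2 := ((hasDerivAt_pow 2 t).div_const 2).mul_const q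
        have := h1.add h2
        exact this.congr_deriv (by norm_num)
      exact (hcomp.sub_const (φ x)).sub hpoly
    have hg'bound : ∀ t ∈ Set.Icc (0:ℝ) h,
        ‖f1 (x + t • v) v - (p + t * q)‖ ≤ Mφ3 * h ^ 2 := by
      intro t ht
      have hz := hseg t ht
      have hzx : x + t • v - x = t • v := by abel
      have h1 : f1 (x + t • v) v - (p + t * q) =
          (f1 (x + t • v) - f1 x - (f2 x) (x + t • v - x)) v := by
        rw [hzx]
        simp only [ContinuousLinearMap.sub_apply, _root_.map_smul, ContinuousLinearMap.smul_apply,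
          smul_eq_mul, hpdef, hqdef]
        ring
      rw [h1]
      calc ‖(f1 (x + t • v) - f1 x - (f2 x) (x + t • v - x)) v‖
          ≤ ‖f1 (x + t • v) - f1 x - (f2 x) (x + t • v - x)‖ * ‖v‖ :=
            ContinuousLinearMap.le_opNorm _ _
        _ = ‖f1 (x + t • v) - f1 x - (f2 x) (x + t • v - x)‖ := by rw [hv, mul_one]
        _ ≤ Mφ3 * h * ‖x + t • v - x‖ := estf1 _ hz
        _ ≤ Mφ3 * h * h := by
            refine mul_le_mul_of_nonneg_left ?_ (mul_nonneg h0Mφ3 hh.le)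
            rw [hzx, norm_smul, hv, mul_one, Real.norm_eq_abs, abs_of_nonneg ht.1]
            exact ht.2
        _ = Mφ3 * h ^ 2 := by ring
    have hgMVT : ‖g h - g 0‖ ≤ Mφ3 * h ^ 2 * ‖(h:ℝ) - 0‖ :=
      Convex.norm_image_sub_le_of_norm_hasDerivWithin_le
        (fun t ht => (hg' t ht).hasDerivWithinAt) hg'bound (convex_Icc 0 h)
        (Set.left_mem_Icc.2 hh.le) (Set.right_mem_Icc.2 hh.le)
    have estΦ : |φ y - φ x - (h * p + h ^ 2 / 2 * q)| ≤ Mφ3 * h ^ 3 := by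
      have g0 : g 0 = 0 := by simp [hgdef]
      have ghh : g h = φ y - φ x - (h * p + h ^ 2 / 2 * q) := by rw [hgdef, hy]
      calc |φ y - φ x - (h * p + h ^ 2 / 2 * q)| = ‖g h - g 0‖ := by
            rw [g0, ghh, sub_zero, Real.norm_eq_abs]
        _ ≤ Mφ3 * h ^ 2 * ‖(h:ℝ) - 0‖ := hgMVT
        _ = Mφ3 * h ^ 3 := by rw [sub_zero, Real.norm_eq_abs, abs_of_pos hh]; ring
    obtain ⟨Φv, hΦvdef⟩ : ∃ P : ℝ, P = (φ y - φ x) / h := ⟨_, rfl⟩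
    have hΦ : |Φv - (p + h / 2 * q)| ≤ Mφ3 * h ^ 2 := by
      have heq : Φv - (p + h / 2 * q) = (φ y - φ x - (h * p + h ^ 2 / 2 * q)) / h := by
        have hcanc : (φ y - φ x) / h * h = φ y - φ x := div_mul_cancel₀ _ hh.ne'
        rw [hΦvdef, eq_div_iff hh.ne', sub_mul, hcanc]; ring
      rw [heq, abs_div, abs_of_pos hh, div_le_iff₀ hh]
      calc |φ y - φ x - (h * p + h ^ 2 / 2 * q)| ≤ Mφ3 * h ^ 3 := estΦ
        _ = Mφ3 * h ^ 2 * h := by ring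
    obtain ⟨u, hudef⟩ : ∃ u0 : ℝ, u0 = p - Φv := ⟨_, rfl⟩
    have hq : |q| ≤ Mφ2 := by
      calc |q| = ‖(f2 x v) v‖ := by rw [hqdef, Real.norm_eq_abs]
        _ ≤ ‖f2 x v‖ * ‖v‖ := ContinuousLinearMap.le_opNorm _ _
        _ ≤ (‖f2 x‖ * ‖v‖) * ‖v‖ :=
            mul_le_mul_of_nonneg_right (ContinuousLinearMap.le_opNorm _ _) (norm_nonneg _)
        _ = ‖f2 x‖ := by rw [hv]; ring
        _ ≤ Mφ2 := hMφ2 x (hSK hx)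
    have hu_half : |u + h / 2 * q| ≤ Mφ3 * h ^ 2 := by
      have heq : u + h / 2 * q = -(Φv - (p + h / 2 * q)) := by rw [hudef]; ring
      rw [heq, abs_neg]; exact hΦ
    have hu : |u| ≤ c1 * h := by
      have h1 : |u| ≤ |u + h / 2 * q| + |h / 2 * q| := by
        have e : u = (u + h / 2 * q) - h / 2 * q := by ring
        calc |u| = |(u + h / 2 * q) - h / 2 * q| := by rw [← e]
          _ ≤ |u + h / 2 * q| + |h / 2 * q| := abs_sub _ _
      have h2 : |h / 2 * q| ≤ h / 2 * Mφ2 := by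
        rw [abs_mul, abs_of_pos (half_pos hh)]
        exact mul_le_mul_of_nonneg_left hq (half_pos hh).le
      have h3 : Mφ3 * h ^ 2 ≤ Mφ3 * h := by
        refine mul_le_mul_of_nonneg_left ?_ h0Mφ3
        nlinarith only [hh, hh1]
      calc |u| ≤ |u + h / 2 * q| + |h / 2 * q| := h1
        _ ≤ Mφ3 * h ^ 2 + h / 2 * Mφ2 := add_le_add hu_half h2
        _ ≤ Mφ3 * h + h / 2 * Mφ2 := by linarith only [h3]
        _ = c1 * h := by rw [hc1def]; ring
    have hu1 : |u| ≤ 1 := hu.trans (by rw [mul_comm]; exact hhc)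
    have hexp_lin : |Real.exp u - 1 - u| ≤ u ^ 2 := Real.abs_exp_sub_one_sub_id_le hu1
    have hu2 : u ^ 2 ≤ c1 ^ 2 * h ^ 2 := by
      have h4 := mul_self_le_mul_self (abs_nonneg u) hu
      calc u ^ 2 = |u| * |u| := by rw [← sq_abs u]; ring
        _ ≤ (c1 * h) * (c1 * h) := h4
        _ = c1 ^ 2 * h ^ 2 := by ring
    have hexp2 : |Real.exp u - (1 - h / 2 * q)| ≤ (c1 ^ 2 + Mφ3) * h ^ 2 := by
      have heq : Real.exp u - (1 - h / 2 * q) = (Real.exp u - 1 - u) + (u + h / 2 * q) := by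
        ring
      rw [heq]
      calc |(Real.exp u - 1 - u) + (u + h / 2 * q)|
          ≤ |Real.exp u - 1 - u| + |u + h / 2 * q| := abs_add_le _ _
        _ ≤ (c1 ^ 2 + Mφ3) * h ^ 2 := by linarith only [hexp_lin, hu_half, hu2]
    have hexpu_le : Real.exp u ≤ 3 := by
      have : Real.exp u ≤ Real.exp 1 :=
        Real.exp_le_exp.2 ((le_abs_self u).trans hu1)
      refine this.trans ?_
      linarith only [Real.exp_one_lt_d9]
    have hp : |p| ≤ Mφ1 := by
      calc |p| = ‖f1 x v‖ := by rw [hpdef, Real.norm_eq_abs]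
        _ ≤ ‖f1 x‖ * ‖v‖ := ContinuousLinearMap.le_opNorm _ _
        _ = ‖f1 x‖ := by rw [hv, mul_one]
        _ ≤ Mφ1 := hMφ1 x (hSK hx)
    have hnegp : Real.exp (-p) ≤ Real.exp Mφ1 :=
      Real.exp_le_exp.2 ((neg_le_abs p).trans hp)
    have hα : |a x| ≤ Ma0 := by rw [← Real.norm_eq_abs]; exact hMa0 x (hSK hx)
    have hβ : |g1 x v| ≤ Ma1 := by
      calc |g1 x v| = ‖g1 x v‖ := rfl
        _ ≤ ‖g1 x‖ * ‖v‖ := ContinuousLinearMap.le_opNorm _ _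
        _ = ‖g1 x‖ := by rw [hv, mul_one]
        _ ≤ Ma1 := hMa1 x (hSK hx)
    have factor : a y * Real.exp (-(φ y - φ x) / h) -
        Real.exp (-p) * (a x + h * g1 x v - h / 2 * q * a x) =
        Real.exp (-p) * (a y * Real.exp u - (a x + h * g1 x v - h / 2 * q * a x)) := by
      have hβe : Real.exp (-(φ y - φ x) / h) = Real.exp (-p) * Real.exp u := by
        rw [← Real.exp_add]; congr 1
        rw [hudef, hΦvdef]; ring
      rw [hβe]; ring
    rw [factor, abs_mul, abs_of_pos (Real.exp_pos _)]
    have inner_eq : a y * Real.exp u - (a x + h * g1 x v - h / 2 * q * a x) =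
        (a y - (a x + h * g1 x v)) * Real.exp u +
        (a x + h * g1 x v) * (Real.exp u - (1 - h / 2 * q)) - h ^ 2 / 2 * (g1 x v * q) := by
      ring
    have t1 : |(a y - (a x + h * g1 x v)) * Real.exp u| ≤ Ma2 * h ^ 2 * 3 := by
      rw [abs_mul, abs_of_pos (Real.exp_pos _)]
      exact mul_le_mul estA' hexpu_le (Real.exp_pos _).le (mul_nonneg h0Ma2 (sq_nonneg h))
    have hsum : |a x + h * g1 x v| ≤ Ma0 + Ma1 := by
      calc |a x + h * g1 x v| ≤ |a x| + |h * g1 x v| := abs_add_le _ _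
        _ ≤ Ma0 + Ma1 := by
            refine add_le_add hα ?_
            rw [abs_mul, abs_of_pos hh]
            calc h * |g1 x v| ≤ 1 * |g1 x v| :=
                  mul_le_mul_of_nonneg_right hh1 (abs_nonneg _)
              _ = |g1 x v| := one_mul _
              _ ≤ Ma1 := hβ
    have t2 : |(a x + h * g1 x v) * (Real.exp u - (1 - h / 2 * q))| ≤
        (Ma0 + Ma1) * ((c1 ^ 2 + Mφ3) * h ^ 2) := by
      rw [abs_mul]
      exact mul_le_mul hsum hexp2 (abs_nonneg _) (add_nonneg h0Ma0 h0Ma1)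
    have t3 : |h ^ 2 / 2 * (g1 x v * q)| ≤ h ^ 2 / 2 * (Ma1 * Mφ2) := by
      rw [abs_mul, abs_of_pos (by positivity : (0:ℝ) < h ^ 2 / 2), abs_mul]
      refine mul_le_mul_of_nonneg_left ?_ (by positivity)
      exact mul_le_mul hβ hq (abs_nonneg _) h0Ma1
    have inner_bound : |a y * Real.exp u - (a x + h * g1 x v - h / 2 * q * a x)| ≤
        (3 * Ma2 + (Ma0 + Ma1) * (c1 ^ 2 + Mφ3) + Ma1 * Mφ2 / 2) * h ^ 2 := by
      rw [inner_eq]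
      calc |(a y - (a x + h * g1 x v)) * Real.exp u +
            (a x + h * g1 x v) * (Real.exp u - (1 - h / 2 * q)) - h ^ 2 / 2 * (g1 x v * q)|
          ≤ |(a y - (a x + h * g1 x v)) * Real.exp u +
            (a x + h * g1 x v) * (Real.exp u - (1 - h / 2 * q))| + |h ^ 2 / 2 * (g1 x v * q)| :=
            abs_sub _ _
        _ ≤ |(a y - (a x + h * g1 x v)) * Real.exp u| +
            |(a x + h * g1 x v) * (Real.exp u - (1 - h / 2 * q))| +
            |h ^ 2 / 2 * (g1 x v * q)| := by
              have := abs_add_le ((a y - (a x + h * g1 x v)) * Real.exp u)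
                ((a x + h * g1 x v) * (Real.exp u - (1 - h / 2 * q)))
              linarith
        _ ≤ (3 * Ma2 + (Ma0 + Ma1) * (c1 ^ 2 + Mφ3) + Ma1 * Mφ2 / 2) * h ^ 2 := by
              linarith only [t1, t2, t3]
    calc Real.exp (-p) * |a y * Real.exp u - (a x + h * g1 x v - h / 2 * q * a x)|
        ≤ Real.exp Mφ1 *
          ((3 * Ma2 + (Ma0 + Ma1) * (c1 ^ 2 + Mφ3) + Ma1 * Mφ2 / 2) * h ^ 2) :=
          mul_le_mul hnegp inner_bound (abs_nonneg _) (Real.exp_pos _).le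
      _ = CK * h ^ 2 := by rw [hCKdef]; ring
  -- choose constants
  have hCpos : (0:ℝ) < 2 * d * CK + 1 := by
    have hdCK : (0:ℝ) ≤ (d:ℝ) * CK := mul_nonneg (Nat.cast_nonneg d) h0CK
    linarith only [hdCK]
  refine ⟨2 * d * CK + 1, hCpos, min δ (min 1 (1 / (c1 + 1))),
    lt_min δpos (lt_min one_pos (one_div_pos.2 (by linarith only [h0c1]))), ?_⟩
  intro h hh hh0 m hmS _hnb
  set x := latE d h m with hxdef
  have hhδ : h ≤ δ := (lt_min_iff.1 hh0).1.le
  have hh1 : h ≤ 1 := (lt_min_iff.1 (lt_min_iff.1 hh0).2).1.le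
  have hhc : h * c1 ≤ 1 := by
    have h2 : h < 1 / (c1 + 1) := (lt_min_iff.1 (lt_min_iff.1 hh0).2).2
    have h3 : h * (c1 + 1) < 1 := (lt_div_iff₀ (by linarith only [h0c1])).1 h2
    linarith only [h3, hh]
  have hnorm_e : ∀ j : Fin d, ‖evec (d := d) j‖ = 1 := fun j => by
    rw [evec, EuclideanSpace.norm_single, norm_one]
  have keyP : ∀ j : Fin d,
      |a (x + h • evec j) * Real.exp (-(φ (x + h • evec j) - φ x) / h) -
        Real.exp (-(f1 x (evec j))) *
          (a x + h * g1 x (evec j) - h / 2 * f2 x (evec j) (evec j) * a x)| ≤ CK * h ^ 2 :=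
    fun j => key h hh hhδ hh1 hhc x hmS (evec j) (hnorm_e j)
  have keyM : ∀ j : Fin d,
      |a (x - h • evec j) * Real.exp (-(φ (x - h • evec j) - φ x) / h) -
        Real.exp (f1 x (evec j)) *
          (a x - h * g1 x (evec j) - h / 2 * f2 x (evec j) (evec j) * a x)| ≤ CK * h ^ 2 := by
    intro j
    have hkey := key h hh hhδ hh1 hhc x hmS (-evec j) (by rw [norm_neg]; exact hnorm_e j)
    have e1 : x + h • (-evec j) = x - h • evec j := by rw [smul_neg, ← sub_eq_add_neg]
    have e2 : f1 x (-evec j) = -f1 x (evec j) := _root_.map_neg _ _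
    have e3 : g1 x (-evec j) = -g1 x (evec j) := _root_.map_neg _ _
    have e4 : f2 x (-evec j) (-evec j) = f2 x (evec j) (evec j) := by
      have e5 : f2 x (-evec j) = -(f2 x (evec j)) := _root_.map_neg _ _
      rw [e5, ContinuousLinearMap.neg_apply, _root_.map_neg, neg_neg]
    rw [e1, e2, e3, e4, neg_neg] at hkey
    have heq : a (x - h • evec j) * Real.exp (-(φ (x - h • evec j) - φ x) / h) -
        Real.exp (f1 x (evec j)) *
          (a x - h * g1 x (evec j) - h / 2 * f2 x (evec j) (evec j) * a x) =
        a (x - h • evec j) * Real.exp (-(φ (x - h • evec j) - φ x) / h) -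
        Real.exp (f1 x (evec j)) *
          (a x + h * -g1 x (evec j) - h / 2 * f2 x (evec j) (evec j) * a x) := by ring
    rw [heq]; exact hkey
  -- conjugated operator formula
  have hterm : ∀ z, Real.exp (φ x / h) * (a z * Real.exp (-φ z / h)) =
      a z * Real.exp (-(φ z - φ x) / h) := by
    intro z
    rw [show -(φ z - φ x) / h = φ x / h + -φ z / h by ring, Real.exp_add]
    ring
  have hself : Real.exp (φ x / h) * (a x * Real.exp (-φ x / h)) = a x := by
    rw [show Real.exp (φ x / h) * (a x * Real.exp (-φ x / h)) =
      a x * (Real.exp (φ x / h) * Real.exp (-φ x / h)) by ring, ← Real.exp_add]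
    simp [neg_div]
  have hE : Real.exp (φ x / h) * Hcont V h (fun y => a y * Real.exp (-φ y / h)) x =
      -(∑ j : Fin d,
        ((a (x + h • evec j) * Real.exp (-(φ (x + h • evec j) - φ x) / h) - a x) +
         (a (x - h • evec j) * Real.exp (-(φ (x - h • evec j) - φ x) / h) - a x))) +
      V x * a x := by
    simp only [Hcont]
    rw [mul_add, mul_neg, Finset.mul_sum]
    congr 1
    · congr 1
      refine Finset.sum_congr rfl fun j _ => ?_
      simp only [mul_add, mul_sub]
      rw [hself, hterm, hterm]
    · calc Real.exp (φ x / h) * (V x * (a x * Real.exp (-φ x / h)))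
          = V x * (Real.exp (φ x / h) * (a x * Real.exp (-φ x / h))) := by ring
        _ = V x * a x := by rw [hself]
  -- model value equals h * transport
  have hiter : ∀ j : Fin d,
      (iteratedFDeriv ℝ 2 φ x ![evec j, evec j]) = f2 x (evec j) (evec j) := by
    intro j
    rw [iteratedFDeriv_two_apply]
    simp only [Matrix.cons_val_zero, Matrix.cons_val_one, Matrix.head_cons]
    rfl
  have hModel : -(∑ j : Fin d,
        ((Real.exp (-(f1 x (evec j))) *
            (a x + h * g1 x (evec j) - h / 2 * f2 x (evec j) (evec j) * a x) - a x) +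
         (Real.exp (f1 x (evec j)) *
            (a x - h * g1 x (evec j) - h / 2 * f2 x (evec j) (evec j) * a x) - a x))) +
      V x * a x = h * transportOp φ a x := by
    have hVx : V x = 4 * ∑ j : Fin d, Real.sinh (f1 x (evec j) / 2) ^ 2 :=
      (heik x (hSΩ hmS)).symm
    rw [hVx, transportOp, ← hf1def, ← hg1def]
    simp only [hiter]
    have L1 : (4 * ∑ j : Fin d, Real.sinh (f1 x (evec j) / 2) ^ 2) * a x =
        ∑ j : Fin d, 4 * Real.sinh (f1 x (evec j) / 2) ^ 2 * a x := by
      rw [Finset.mul_sum, Finset.sum_mul]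
    have L2 : h * (2 * ∑ j : Fin d, Real.sinh (f1 x (evec j)) * g1 x (evec j) +
        ∑ j : Fin d, Real.cosh (f1 x (evec j)) * f2 x (evec j) (evec j) * a x) =
        ∑ j : Fin d, h * (2 * (Real.sinh (f1 x (evec j)) * g1 x (evec j)) +
          Real.cosh (f1 x (evec j)) * f2 x (evec j) (evec j) * a x) := by
      calc h * (2 * ∑ j : Fin d, Real.sinh (f1 x (evec j)) * g1 x (evec j) +
          ∑ j : Fin d, Real.cosh (f1 x (evec j)) * f2 x (evec j) (evec j) * a x) =
          h * ((∑ j : Fin d, 2 * (Real.sinh (f1 x (evec j)) * g1 x (evec j))) +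
          ∑ j : Fin d, Real.cosh (f1 x (evec j)) * f2 x (evec j) (evec j) * a x) := by
            rw [Finset.mul_sum]
        _ = h * ∑ j : Fin d, (2 * (Real.sinh (f1 x (evec j)) * g1 x (evec j)) +
            Real.cosh (f1 x (evec j)) * f2 x (evec j) (evec j) * a x) := by
            rw [Finset.sum_add_distrib]
        _ = ∑ j : Fin d, h * (2 * (Real.sinh (f1 x (evec j)) * g1 x (evec j)) +
            Real.cosh (f1 x (evec j)) * f2 x (evec j) (evec j) * a x) := by
            rw [Finset.mul_sum]
    rw [L1, L2, ← Finset.sum_neg_distrib, ← Finset.sum_add_distrib]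
    refine Finset.sum_congr rfl fun j _ => ?_
    simp only [Real.sinh_eq, Real.cosh_eq]
    linear_combination (a x) * four_sinh_half_sq' (f1 x (evec j))
  rw [hE, ← hModel]
  have hdiff : (-(∑ j : Fin d,
        ((a (x + h • evec j) * Real.exp (-(φ (x + h • evec j) - φ x) / h) - a x) +
         (a (x - h • evec j) * Real.exp (-(φ (x - h • evec j) - φ x) / h) - a x))) +
      V x * a x) -
      (-(∑ j : Fin d,
        ((Real.exp (-(f1 x (evec j))) *
            (a x + h * g1 x (evec j) - h / 2 * f2 x (evec j) (evec j) * a x) - a x) +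
         (Real.exp (f1 x (evec j)) *
            (a x - h * g1 x (evec j) - h / 2 * f2 x (evec j) (evec j) * a x) - a x))) +
      V x * a x) =
      ∑ j : Fin d,
        ((Real.exp (-(f1 x (evec j))) *
            (a x + h * g1 x (evec j) - h / 2 * f2 x (evec j) (evec j) * a x) -
          a (x + h • evec j) * Real.exp (-(φ (x + h • evec j) - φ x) / h)) +
         (Real.exp (f1 x (evec j)) *
            (a x - h * g1 x (evec j) - h / 2 * f2 x (evec j) (evec j) * a x) -
          a (x - h • evec j) * Real.exp (-(φ (x - h • evec j) - φ x) / h))) := by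
    have hAB : ∀ (A B : ℝ), (-A + V x * a x) - (-B + V x * a x) = B - A := fun A B => by ring
    rw [hAB, ← Finset.sum_sub_distrib]
    refine Finset.sum_congr rfl fun j _ => ?_
    ring
  rw [hdiff]
  calc |∑ j : Fin d, _| ≤ ∑ j : Fin d,
      |(Real.exp (-(f1 x (evec j))) *
            (a x + h * g1 x (evec j) - h / 2 * f2 x (evec j) (evec j) * a x) -
          a (x + h • evec j) * Real.exp (-(φ (x + h • evec j) - φ x) / h)) +
         (Real.exp (f1 x (evec j)) *
            (a x - h * g1 x (evec j) - h / 2 * f2 x (evec j) (evec j) * a x) -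
          a (x - h • evec j) * Real.exp (-(φ (x - h • evec j) - φ x) / h))| :=
        Finset.abs_sum_le_sum_abs _ _
    _ ≤ ∑ _j : Fin d, (2 * CK * h ^ 2) := by
        refine Finset.sum_le_sum fun j _ => ?_
        have h1 := keyP j
        have h2 := keyM j
        rw [abs_sub_comm] at h1 h2
        calc |_ + _| ≤ _ + _ := abs_add_le _ _
          _ ≤ CK * h ^ 2 + CK * h ^ 2 := add_le_add h1 h2
          _ = 2 * CK * h ^ 2 := by ring
    _ = d * (2 * CK * h ^ 2) := by
        rw [Finset.sum_const, Finset.card_univ, Fintype.card_fin, nsmul_eq_mul]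
    _ ≤ (2 * d * CK + 1) * h ^ 2 := by linarith only [sq_nonneg h]

end
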